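/- arXiv:1904.08351 — 2 statements merged into one kernel-verified Lean document; each statement's English description precedes it below -/
import Mathlib

section
/- Let C denote the blobbed Catalan triangle. For all integers i and j with the same parity satisfying 0 ≤ i ≤ j, one has C(i,j) = 2^i. (In particular, all entries of the blobbed Catalan triangle on or above the main diagonal are powers of 2, and C(i,i) = 2^i.) -/
/-! Both neighbours `(i, j ∓ 1)` of an entry with `i + 1 ≤ j` lie on or above the diagonal of
row `i`, so the boundary `C(i, -1) = 0` is never reached and each row above the diagonal
is twice the previous one. -/

/-- Auxiliary (index-shifted) version of the blobbed Catalan triangle: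
`blobbedCAux (i+1) (j+1) = C(i,j)`. -/
def blobbedCAux : ℕ → ℕ → ℕ
  | 0, j => if j % 2 = 0 then 1 else 0
  | 1, j => if j % 2 = 1 then 1 else 0
  | _ + 2, 0 => 0
  | i + 2, j + 1 => blobbedCAux (i + 1) j + blobbedCAux (i + 1) (j + 2)

/-- The blobbed Catalan triangle `C(i,j)`, defined for integers `i, j ≥ -1`:
`C(i,j) = 1` if `i ∈ {-1,0}` and `i+j` is even, `C(i,j) = 0` if `i ∈ {-1,0}` and `i+j`
is odd, `C(i,-1) = 0` for `i ≥ 1`, and `C(i,j) = C(i-1,j-1) + C(i-1,j+1)` for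
`i ≥ 1`, `j ≥ 0`. -/
def blobbedC (i j : ℤ) : ℕ := blobbedCAux (i + 1).toNat (j + 1).toNat

theorem blobbedC_zero_of_even {j : ℤ} (hj : 0 ≤ j) (heven : j % 2 = 0) : blobbedC 0 j = 1 := by
  lift j to ℕ using hj
  have hodd : (j + 1) % 2 = 1 := by omega
  simp [blobbedC, blobbedCAux, hodd]

theorem blobbedC_eq_add {i j : ℤ} (hi : 1 ≤ i) (hj : 0 ≤ j) :
    blobbedC i j = blobbedC (i - 1) (j - 1) + blobbedC (i - 1) (j + 1) := by
  obtain ⟨n, rfl⟩ : ∃ n : ℕ, i = n + 1 := ⟨i.toNat - 1, by omega⟩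
  lift j to ℕ using hj
  have hrow : (↑n + 1 + 1 : ℤ).toNat = n + 2 := by omega
  have hrow' : (↑n + 1 - 1 + 1 : ℤ).toNat = n + 1 := by omega
  have hcol : (↑j - 1 + 1 : ℤ).toNat = j := by omega
  have hcol' : (↑j + 1 + 1 : ℤ).toNat = j + 2 := by omega
  simp only [blobbedC, hrow, hrow', hcol, hcol', Int.toNat_natCast_add_one, blobbedCAux]

/-- For all integers `i`, `j` of the same parity with `0 ≤ i ≤ j`, `C(i,j) = 2^i`.
In particular `C(i,i) = 2^i`. -/
theorem blobbedC_above_diag (i j : ℤ) (hpar : i % 2 = j % 2) (hi : 0 ≤ i) (hij : i ≤ j) :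
    blobbedC i j = 2 ^ i.toNat := by
  induction i, hi using Int.leInduction generalizing j with
  | base => exact blobbedC_zero_of_even hij (by omega)
  | succ i hi ih =>
    have below : blobbedC i (j - 1) = 2 ^ i.toNat := ih (j - 1) (by omega) (by omega)
    have above : blobbedC i (j + 1) = 2 ^ i.toNat := ih (j + 1) (by omega) (by omega)
    rw [blobbedC_eq_add (by omega) (by omega), add_sub_cancel_right, below, above,
      show (i + 1).toNat = i.toNat + 1 by omega, pow_succ, mul_two]
end

section
/- Let n ≥ 1 and let C denote the blobbed Catalan triangle. If n is even then d(n,1) = C(n,0)², and if n is odd then 4·d(n,1) = C(n,1)² (i.e., d(n,1) = (C(n,1)/2)²). Here d(n,1) counts the positive normal forms on n of affine length 1 whose grid contains a horizontal translate of G(w_n^I) or of G(w_n^J). -/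
/-- `w` is a positive normal form on `n`: a sequence of blocks `(l_i, r_i)` with
`n ≥ l_1 ≥ … ≥ l_k ≥ 0`, `n ≥ r_1 ≥ … ≥ r_k ≥ 0`, `l_i ≤ r_i` for all `i`,
where `l` may repeat (consecutively) only at the value `0` and `r` may repeat only
at the value `n`. -/
def IsPNF (n : ℤ) (w : List (ℤ × ℤ)) : Prop :=
  (∀ p ∈ w, 0 ≤ p.1 ∧ p.1 ≤ p.2 ∧ p.2 ≤ n) ∧
  List.Chain' (fun p q : ℤ × ℤ =>
    q.1 ≤ p.1 ∧ q.2 ≤ p.2 ∧ (q.1 = p.1 → p.1 = 0) ∧ (q.2 = p.2 → p.2 = n)) w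

/-- The affine length of a normal form: the number of blocks whose right endpoint is `n`. -/
def affineLength (n : ℤ) (w : List (ℤ × ℤ)) : ℕ :=
  w.countP (fun p => p.2 = n)

/-- `numPNF n s` is the number `a(n,s)` of positive normal forms on `n` of affine length `s`. -/
noncomputable def numPNF (n : ℤ) (s : ℕ) : ℕ :=
  Nat.card {w : List (ℤ × ℤ) // IsPNF n w ∧ affineLength n w = s}

/-- The grid of a normal form `((l_1,r_1),…,(l_k,r_k))`:
`{(i,j) ∈ ℤ² : 1 ≤ i ≤ k, l_i ≤ j ≤ r_i}`. -/
def grid (w : List (ℤ × ℤ)) : Set (ℤ × ℤ) :=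
  {p | ∃ i : ℕ, i < w.length ∧ p.1 = (i : ℤ) + 1 ∧
    (w.getD i (0, 0)).1 ≤ p.2 ∧ p.2 ≤ (w.getD i (0, 0)).2}

/-- `G` contains a horizontal translate of `G'`. -/
def ContainsTranslate (G G' : Set (ℤ × ℤ)) : Prop :=
  ∃ m : ℤ, ∀ p ∈ G', ((p.1 + m, p.2) : ℤ × ℤ) ∈ G

/-- The normal form `w_n^I`. -/
def wI (n : ℤ) : List (ℤ × ℤ) :=
  if n = 1 then [(1, 1), (0, 1)]
  else if Even n then
    (n - 1, n) :: (((List.range ((n - 2) / 2).toNat).map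
      fun t : ℕ => (n - 3 - 2 * (t : ℤ), n - 1 - 2 * (t : ℤ))) ++ [(0, 1)])
  else
    (n, n) :: (n - 2, n) :: (((List.range ((n - 3) / 2).toNat).map
      fun t : ℕ => (n - 4 - 2 * (t : ℤ), n - 2 - 2 * (t : ℤ))) ++ [(0, 1)])

/-- The normal form `w_n^J`. -/
def wJ (n : ℤ) : List (ℤ × ℤ) :=
  if Even n then
    (n, n) :: (n - 2, n) :: (((List.range ((n - 2) / 2).toNat).map
      fun t : ℕ => (n - 4 - 2 * (t : ℤ), n - 2 - 2 * (t : ℤ))) ++ [(0, 0)])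
  else
    (n - 1, n) :: (((List.range ((n - 1) / 2).toNat).map
      fun t : ℕ => (n - 3 - 2 * (t : ℤ), n - 1 - 2 * (t : ℤ))) ++ [(0, 0)])

/-- `numBadPNF n s` is the number `d(n,s)` of positive normal forms on `n` of affine
length `s` whose grid contains a horizontal translate of `G(w_n^I)` or of `G(w_n^J)`. -/
noncomputable def numBadPNF (n : ℤ) (s : ℕ) : ℕ :=
  Nat.card {w : List (ℤ × ℤ) // IsPNF n w ∧ affineLength n w = s ∧
    (ContainsTranslate (grid w) (grid (wI n)) ∨ ContainsTranslate (grid w) (grid (wJ n)))}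

/-!
An affine-length-one normal form has exactly one column reaching height `n`, its first. Of `w_n^I`
and `w_n^J`, the one whose first two columns reach `n` (`w_n^J` for even `n`, `w_n^I` for odd `n`)
therefore never fits in its grid, while the other one is a staircase with columns
`[n - 1 - 2i, n + 1 - 2i]`, which can only fit untranslated. Writing `n + 1 = 2m + e` with
`e ∈ {0, 1}`, fitting the staircase means that the first `m` left endpoints lie below the
staircase (the later ones vanish) and the right endpoints after the first lie above it. These two
conditions are independent, so `d(n, 1)` is a product of two counts of decreasing sequences.
Conditioning on the first entry turns each count into a hockey-stick sum in the blobbed Catalan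
triangle, and each factor equals `C(n, 0)` for even `n` and `C(n, 1) / 2` for odd `n`.
-/

section ListGetD
variable {α : Type*} {l l' : List α} {d : α}

lemma List.forall_mem_iff_getD {p : α → Prop} :
    (∀ x ∈ l, p x) ↔ ∀ i < l.length, p (l.getD i d) := by
  rw [List.forall_mem_iff_getElem]
  exact forall_congr' fun i => forall_congr' fun hi => by rw [List.getD_eq_getElem _ _ hi]

lemma List.isChain_iff_getD {R : α → α → Prop} :
    l.IsChain R ↔ ∀ i, i + 1 < l.length → R (l.getD i d) (l.getD (i + 1) d) := by
  rw [List.isChain_iff_getElem]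
  exact forall_congr' fun i => forall_congr' fun hi => by
    rw [List.getD_eq_getElem _ _ hi, List.getD_eq_getElem _ _ (by omega)]

lemma List.ext_getD (hl : l.length = l'.length) (h : ∀ i < l.length, l.getD i d = l'.getD i d) :
    l = l' :=
  List.ext_getElem hl fun i h₁ h₂ => by
    simpa only [List.getD_eq_getElem _ _ h₁, List.getD_eq_getElem _ _ h₂] using h i h₁

lemma List.getD_append_replicate (n i : ℕ) : (l ++ List.replicate n d).getD i d = l.getD i d := by
  rcases lt_or_ge i l.length with hi | hi
  · exact List.getD_append _ _ _ _ hi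
  · rw [List.getD_append_right _ _ _ _ hi, List.getD_eq_default _ _ hi, List.getD_eq_getElem?_getD,
      List.getElem?_getD_replicate_default_eq]

lemma List.getD_zip {β : Type*} {r : List β} {e : β} (hl : l.length = r.length) (i : ℕ) :
    (l.zip r).getD i (d, e) = (l.getD i d, r.getD i e) := by
  rcases lt_or_ge i l.length with hi | hi
  · rw [List.getD_eq_getElem _ _ (by simp [← hl, hi]), List.getElem_zip,
      List.getD_eq_getElem _ _ hi, List.getD_eq_getElem _ _ (hl ▸ hi)]
  · rw [List.getD_eq_default _ _ (by simp [hi]), List.getD_eq_default _ _ hi,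
      List.getD_eq_default _ _ (hl ▸ hi)]

end ListGetD

lemma List.getD_lt_of_isChain_gt {y : ℤ} {l : List ℤ} (h : List.IsChain (· > ·) (y :: l)) :
    ∀ i < l.length, l.getD i 0 < y :=
  List.forall_mem_iff_getD.1 fun _ hx =>
    List.rel_of_pairwise_cons (List.isChain_iff_pairwise.1 h) hx

section PNF
variable {n : ℤ} {w : List (ℤ × ℤ)}

lemma isPNF_iff_getD : IsPNF n w ↔
    (∀ i < w.length, 0 ≤ (w.getD i (0, 0)).1 ∧ (w.getD i (0, 0)).1 ≤ (w.getD i (0, 0)).2 ∧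
      (w.getD i (0, 0)).2 ≤ n) ∧
    ∀ i, i + 1 < w.length →
      (w.getD (i + 1) (0, 0)).1 ≤ (w.getD i (0, 0)).1 ∧
      (w.getD (i + 1) (0, 0)).2 ≤ (w.getD i (0, 0)).2 ∧
      ((w.getD (i + 1) (0, 0)).1 = (w.getD i (0, 0)).1 → (w.getD i (0, 0)).1 = 0) ∧
      ((w.getD (i + 1) (0, 0)).2 = (w.getD i (0, 0)).2 → (w.getD i (0, 0)).2 = n) :=
  Iff.and List.forall_mem_iff_getD List.isChain_iff_getD

lemma IsPNF.getD_fst_le (hw : IsPNF n w) {i j : ℕ} (hij : i ≤ j) (hj : j < w.length) :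
    (w.getD j (0, 0)).1 ≤ (w.getD i (0, 0)).1 := by
  induction j, hij using Nat.le_induction with
  | base => rfl
  | succ j _ ih => exact ((isPNF_iff_getD.1 hw).2 j hj).1.trans (ih (by omega))

lemma IsPNF.getD_snd_le (hw : IsPNF n w) {i j : ℕ} (hij : i ≤ j) (hj : j < w.length) :
    (w.getD j (0, 0)).2 ≤ (w.getD i (0, 0)).2 := by
  induction j, hij using Nat.le_induction with
  | base => rfl
  | succ j _ ih => exact ((isPNF_iff_getD.1 hw).2 j hj).2.1.trans (ih (by omega))

lemma affineLength_eq_one_iff (hw : IsPNF n w) :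
    affineLength n w = 1 ↔ 0 < w.length ∧ (w.getD 0 (0, 0)).2 = n ∧
      ∀ i, i + 1 < w.length → (w.getD (i + 1) (0, 0)).2 ≠ n := by
  cases w with
  | nil => simp [affineLength]
  | cons a t =>
    have hbelow : ∀ p ∈ t, p.2 ≤ a.2 := by
      rw [List.forall_mem_iff_getD (d := (0, 0))]
      intro i hi
      simpa using hw.getD_snd_le (Nat.zero_le (i + 1)) (by simpa using hi)
    have htop : a.2 ≤ n := by simpa using ((isPNF_iff_getD.1 hw).1 0 (by simp)).2.2
    have hrest : (∀ i, i + 1 < (a :: t).length → ((a :: t).getD (i + 1) (0, 0)).2 ≠ n) ↔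
        t.countP (fun p => p.2 = n) = 0 := by
      simp only [List.countP_eq_zero, List.forall_mem_iff_getD (d := ((0 : ℤ), (0 : ℤ))),
        List.length_cons, List.getD_cons_succ, Nat.add_lt_add_iff_right, decide_eq_true_eq]
    rw [hrest, affineLength, List.countP_cons]
    by_cases ha : a.2 = n
    · simp [ha]
    · have : t.countP (fun p => p.2 = n) = 0 :=
        List.countP_eq_zero.2 fun p hp => by
          have := hbelow p hp
          simp only [decide_eq_true_eq]
          omega
      simp [ha, this]

lemma eq_one_of_mem_grid (hw : IsPNF n w) (h1 : affineLength n w = 1) {a : ℤ}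
    (ha : (a, n) ∈ grid w) : a = 1 := by
  obtain ⟨i, hi, rfl, -, hn⟩ := ha
  obtain ⟨-, -, hrest⟩ := (affineLength_eq_one_iff hw).1 h1
  cases i with
  | zero => simp
  | succ i => exact absurd (le_antisymm ((isPNF_iff_getD.1 hw).1 _ hi).2.2 hn) (hrest i hi)

lemma not_containsTranslate_of_mem_grid (hw : IsPNF n w) (h1 : affineLength n w = 1)
    {u : List (ℤ × ℤ)} (hu₁ : (1, n) ∈ grid u) (hu₂ : (2, n) ∈ grid u) :
    ¬ ContainsTranslate (grid w) (grid u) := by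
  rintro ⟨s, hs⟩
  have h₁ := eq_one_of_mem_grid hw h1 (hs _ hu₁)
  have h₂ := eq_one_of_mem_grid hw h1 (hs _ hu₂)
  omega

lemma containsTranslate_iff_subset (hw : IsPNF n w) (h1 : affineLength n w = 1)
    {v : List (ℤ × ℤ)} (hv : (1, n) ∈ grid v) :
    ContainsTranslate (grid w) (grid v) ↔ grid v ⊆ grid w := by
  refine ⟨fun ⟨s, hs⟩ => ?_, fun h => ⟨0, fun p hp => by simpa using h hp⟩⟩
  obtain rfl : s = 0 := by have := eq_one_of_mem_grid hw h1 (hs _ hv); omega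
  exact fun p hp => by simpa using hs p hp

end PNF

lemma grid_subset_grid_iff {v w : List (ℤ × ℤ)}
    (hv : ∀ i < v.length, (v.getD i (0, 0)).1 ≤ (v.getD i (0, 0)).2) :
    grid v ⊆ grid w ↔ v.length ≤ w.length ∧ ∀ i < v.length,
      (w.getD i (0, 0)).1 ≤ (v.getD i (0, 0)).1 ∧
        (v.getD i (0, 0)).2 ≤ (w.getD i (0, 0)).2 := by
  constructor
  · intro h
    have key : ∀ i < v.length, i < w.length ∧ (w.getD i (0, 0)).1 ≤ (v.getD i (0, 0)).1 ∧
        (v.getD i (0, 0)).2 ≤ (w.getD i (0, 0)).2 := by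
      intro i hi
      obtain ⟨j, hj, hji, hl, -⟩ := h (a := ((i : ℤ) + 1, (v.getD i (0, 0)).1))
        ⟨i, hi, rfl, le_rfl, hv i hi⟩
      obtain ⟨k, -, hki, -, hr⟩ := h (a := ((i : ℤ) + 1, (v.getD i (0, 0)).2))
        ⟨i, hi, rfl, hv i hi, le_rfl⟩
      obtain rfl : j = i := by omega
      obtain rfl : k = j := by omega
      exact ⟨hj, hl, hr⟩
    refine ⟨?_, fun i hi => (key i hi).2⟩
    by_contra hlt
    exact lt_irrefl _ (key w.length (by omega)).1
  · rintro ⟨hlen, hle⟩ p ⟨i, hi, hp, hl, hr⟩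
    exact ⟨i, hi.trans_le hlen, hp, (hle i hi).1.trans hl, hr.trans (hle i hi).2⟩

/-- Column `i` is `[n - 1 - 2i, n + 1 - 2i]` clipped to `[0, n]`; for `n + 1 = 2m + e` this is
`w_n^I` when `n` is even and `w_n^J` when `n` is odd. -/
def staircase (n : ℤ) (m : ℕ) : List (ℤ × ℤ) :=
  (List.range (m + 1)).map fun i : ℕ =>
    (max (n - 1 - 2 * (i : ℤ)) 0, if i = 0 then n else n + 1 - 2 * (i : ℤ))

section Staircase
variable {n : ℤ} {m e : ℕ}

lemma staircase_eq_cons (hn : n + 1 = 2 * m + e) (he : e ≤ 1) (hm : 1 ≤ m) :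
    staircase n m = (n - 1, n) :: ((List.range (m - 1)).map
      (fun t : ℕ => (n - 3 - 2 * (t : ℤ), n - 1 - 2 * (t : ℤ))) ++ [(0, (e : ℤ))]) := by
  obtain ⟨k, rfl⟩ : ∃ k, m = k + 1 := ⟨m - 1, by omega⟩
  rw [staircase, List.range_succ_eq_map, List.range_succ, List.map_cons, List.map_map,
    List.map_append, List.map_singleton, Nat.add_sub_cancel]
  push_cast at hn
  congr 1
  · simp only [CharP.cast_eq_zero, mul_zero, sub_zero, if_true, Prod.mk.injEq, and_true]
    omega
  · congr 1
    · refine List.map_congr_left fun t ht => ?_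
      simp only [List.mem_range] at ht
      simp only [Function.comp, Nat.succ_eq_add_one, Nat.cast_add, Nat.cast_one,
        Nat.add_one_ne_zero, if_false, Prod.mk.injEq]
      omega
    · simp only [Function.comp, Nat.succ_eq_add_one, Nat.cast_add, Nat.cast_one,
        Nat.add_one_ne_zero, if_false, List.cons.injEq, Prod.mk.injEq, and_true]
      omega

lemma wI_eq_staircase (hn : n = 2 * m) (hm : 1 ≤ m) : wI n = staircase n m := by
  rw [staircase_eq_cons (e := 1) (by omega) le_rfl hm, wI, if_neg (by omega),
    if_pos ⟨m, by omega⟩, show ((n - 2) / 2).toNat = m - 1 by omega]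
  rfl

lemma wJ_eq_staircase (hn : n + 1 = 2 * m) (hm : 1 ≤ m) : wJ n = staircase n m := by
  rw [staircase_eq_cons (e := 0) (by omega) (Nat.zero_le 1) hm, wJ,
    if_neg (by rintro ⟨k, hk⟩; omega), show ((n - 1) / 2).toNat = m - 1 by omega]
  rfl

lemma getD_staircase {i : ℕ} (hi : i ≤ m) : (staircase n m).getD i (0, 0) =
    (max (n - 1 - 2 * (i : ℤ)) 0, if i = 0 then n else n + 1 - 2 * (i : ℤ)) := by
  simp [staircase, List.getD_eq_getElem?_getD, List.getElem?_range (Nat.lt_succ_of_le hi)]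

lemma one_mem_grid_staircase (hn : 1 ≤ n) : (1, n) ∈ grid (staircase n m) :=
  ⟨0, by simp [staircase], by simp, by
    rw [getD_staircase (Nat.zero_le m), if_pos rfl]
    exact ⟨max_le (by omega) (by omega), le_rfl⟩⟩

lemma subset_grid_staircase_iff (hn : n + 1 = 2 * m + e) (he : e ≤ 1) (hm : 1 ≤ m)
    {w : List (ℤ × ℤ)} :
    grid (staircase n m) ⊆ grid w ↔ m < w.length ∧ (w.getD m (0, 0)).1 ≤ 0 ∧
      n ≤ (w.getD 0 (0, 0)).2 ∧ ∀ i < m,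
        (w.getD i (0, 0)).1 + 2 * i + 1 ≤ n ∧ n ≤ (w.getD (i + 1) (0, 0)).2 + 2 * i + 1 := by
  have hlen : (staircase n m).length = m + 1 := by simp [staircase]
  have hv : ∀ i < (staircase n m).length,
      ((staircase n m).getD i (0, 0)).1 ≤ ((staircase n m).getD i (0, 0)).2 := by
    intro i hi
    rw [hlen] at hi
    rw [getD_staircase (by omega)]
    split_ifs <;> simp only [max_le_iff] <;> omega
  rw [grid_subset_grid_iff hv, hlen, Nat.add_one_le_iff]
  refine and_congr_right fun _ => ⟨fun h => ?_, fun ⟨hlm, hr0, hstep⟩ i hi => ?_⟩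
  · have h' := fun i (hi : i ≤ m) => getD_staircase (n := n) hi ▸ h i (by omega)
    refine ⟨?_, by simpa using (h' 0 (Nat.zero_le m)).2, fun i hi => ⟨?_, ?_⟩⟩
    · have := (h' m le_rfl).1
      rwa [max_eq_right (by omega)] at this
    · have := le_max_iff.1 (h' i hi.le).1
      omega
    · have := (h' (i + 1) hi).2
      simp only [Nat.add_one_ne_zero, if_false] at this
      omega
  · rw [getD_staircase (by omega)]
    refine ⟨?_, ?_⟩
    · rcases Nat.lt_or_ge i m with him | him
      · exact le_max_of_le_left (by have := (hstep i him).1; omega)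
      · obtain rfl : i = m := by omega
        exact le_max_of_le_right hlm
    · rcases i with _ | i
      · simpa using hr0
      · have := (hstep i (by omega)).2
        simp only [Nat.add_one_ne_zero, if_false]
        omega

end Staircase

lemma top_mem_grid_wJ_of_even {n : ℤ} (h : Even n) :
    (1, n) ∈ grid (wJ n) ∧ (2, n) ∈ grid (wJ n) := by
  rw [wJ, if_pos h]
  refine ⟨⟨0, ?_⟩, ⟨1, ?_⟩⟩ <;> simp

lemma top_mem_grid_wI_of_odd {n : ℤ} (h : ¬ Even n) :
    (1, n) ∈ grid (wI n) ∧ (2, n) ∈ grid (wI n) := by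
  rw [wI]
  split_ifs with h1 <;> refine ⟨⟨0, ?_⟩, ⟨1, ?_⟩⟩ <;> simp [h1]

def LeftStep (a b : ℤ) : Prop := b ≤ a ∧ (b = a → a = 0)

def decreasingLists : ℕ → Finset (List ℤ)
  | 0 => {[]}
  | y + 1 => decreasingLists y ∪ (decreasingLists y).image ((y : ℤ) :: ·)

lemma mem_decreasingLists (y : ℕ) (rs : List ℤ) :
    rs ∈ decreasingLists y ↔
      List.IsChain (· > ·) ((y : ℤ) :: rs) ∧ ∀ x ∈ rs, 0 ≤ x := by
  induction y generalizing rs with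
  | zero =>
    cases rs with
    | nil => simp [decreasingLists]
    | cons a t =>
      simp only [decreasingLists, Finset.mem_singleton, reduceCtorEq, false_iff,
        List.isChain_cons_cons, List.forall_mem_cons]
      rintro ⟨⟨ha, -⟩, ha', -⟩
      omega
  | succ y ih =>
    cases rs with
    | nil => simp [decreasingLists, ih]
    | cons a t =>
      simp only [decreasingLists, Finset.mem_union, Finset.mem_image, ih, List.cons.injEq,
        List.isChain_cons_cons, List.forall_mem_cons]
      constructor
      · rintro (⟨⟨hya, ha⟩, h0a, ht⟩ | ⟨t', ⟨ht', ht'0⟩, rfl, rfl⟩)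
        · exact ⟨⟨by omega, ha⟩, h0a, ht⟩
        · exact ⟨⟨by omega, ht'⟩, by positivity, ht'0⟩
      · rintro ⟨⟨hya, ha⟩, h0a, ht⟩
        rcases lt_or_eq_of_le (show a ≤ y by push_cast at hya; omega) with hay | rfl
        · exact Or.inl ⟨⟨hay, ha⟩, h0a, ht⟩
        · exact Or.inr ⟨t, ⟨ha, ht⟩, rfl, rfl⟩

lemma card_decreasingLists (y : ℕ) : (decreasingLists y).card = 2 ^ y := by
  induction y with
  | zero => rfl
  | succ y ih =>
    have hdisj : Disjoint (decreasingLists y) ((decreasingLists y).image ((y : ℤ) :: ·)) := by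
      simp only [Finset.disjoint_right, Finset.mem_image]
      rintro _ ⟨t, -, rfl⟩ h
      simpa [List.isChain_cons_cons] using ((mem_decreasingLists y _).1 h).1
    rw [decreasingLists, Finset.card_union_of_disjoint hdisj,
      Finset.card_image_of_injective _ List.cons_injective, ih, pow_succ, mul_two]

def leftParts (e : ℕ) : ℕ → ℕ → Finset (List ℤ)
  | 0, _ => {[]}
  -- at `y = 0` the truncated `y - 1` still admits the entry `0`, as `LeftStep 0 0` does
  | m + 1, y => (Finset.range (min (2 * m + e) (y - 1) + 1)).biUnion fun x =>
      (leftParts e m x).image ((x : ℤ) :: ·)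

def rightParts (e : ℕ) : ℕ → ℕ → Finset (List ℤ)
  | 0, y => decreasingLists y
  | m + 1, y => (Finset.Ico (2 * m + e) y).biUnion fun x =>
      (rightParts e m x).image ((x : ℤ) :: ·)

lemma mem_leftParts (e m y : ℕ) (ls : List ℤ) :
    ls ∈ leftParts e m y ↔ ls.length = m ∧ List.IsChain LeftStep ((y : ℤ) :: ls) ∧
      ∀ i < m, 0 ≤ ls.getD i 0 ∧ ls.getD i 0 + 2 * i + 2 ≤ 2 * m + e := by
  induction m generalizing y ls with
  | zero =>
    simp only [leftParts, Finset.mem_singleton, List.length_eq_zero_iff, Nat.not_lt_zero]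
    constructor
    · rintro rfl
      simp
    · exact fun h => h.1
  | succ m ih =>
    cases ls with
    | nil => simp [leftParts]
    | cons a t =>
      simp only [leftParts, Finset.mem_biUnion, Finset.mem_range, Finset.mem_image, ih,
        List.cons.injEq, List.isChain_cons_cons, Nat.forall_lt_succ_left, List.getD_cons_zero,
        List.getD_cons_succ, List.length_cons, LeftStep]
      constructor
      · rintro ⟨x, hx, t', ⟨hlen, hchain, hb⟩, rfl, rfl⟩
        refine ⟨by omega, ⟨⟨by omega, fun _ => by omega⟩, hchain⟩,
          ⟨by positivity, by omega⟩, fun i hi => ?_⟩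
        have := hb i hi
        omega
      · rintro ⟨hlen, ⟨⟨hay, hay'⟩, hchain⟩, ⟨h0a, ha⟩, hb⟩
        lift a to ℕ using h0a
        refine ⟨a, ?_, t, ⟨by omega, hchain, fun i hi => ?_⟩, rfl, rfl⟩
        · push_cast at ha hay hay'
          omega
        · have := hb i hi
          omega

lemma mem_rightParts (e m y : ℕ) (rs : List ℤ) :
    rs ∈ rightParts e m y ↔ m ≤ rs.length ∧ List.IsChain (· > ·) ((y : ℤ) :: rs) ∧
      (∀ x ∈ rs, 0 ≤ x) ∧ ∀ i < m, 2 * m + e ≤ rs.getD i 0 + 2 * i + 2 := by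
  induction m generalizing y rs with
  | zero => simp [rightParts, mem_decreasingLists]
  | succ m ih =>
    cases rs with
    | nil => simp [rightParts]
    | cons a t =>
      simp only [rightParts, Finset.mem_biUnion, Finset.mem_Ico, Finset.mem_image, ih,
        List.cons.injEq, List.isChain_cons_cons, Nat.forall_lt_succ_left, List.getD_cons_zero,
        List.getD_cons_succ, List.length_cons, List.forall_mem_cons]
      constructor
      · rintro ⟨x, hx, t', ⟨hlen, hchain, h0, hb⟩, rfl, rfl⟩
        refine ⟨by omega, ⟨by omega, hchain⟩, ⟨by positivity, h0⟩, by omega,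
          fun i hi => ?_⟩
        have := hb i hi
        omega
      · rintro ⟨hlen, ⟨hay, hchain⟩, ⟨h0a, h0⟩, ha, hb⟩
        lift a to ℕ using h0a
        refine ⟨a, ?_, t, ⟨by omega, hchain, h0, fun i hi => ?_⟩, rfl, rfl⟩
        · push_cast at ha hay
          omega
        · have := hb i hi
          omega

def toParts (m : ℕ) (w : List (ℤ × ℤ)) : List ℤ × List ℤ :=
  ((w.map Prod.fst).take m, (w.map Prod.snd).tail)

def ofParts (n : ℤ) (p : List ℤ × List ℤ) : List (ℤ × ℤ) :=
  (p.1 ++ List.replicate (p.2.length + 1 - p.1.length) 0).zip (n :: p.2)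

section Parts
variable {n : ℤ} {m : ℕ} {w : List (ℤ × ℤ)} {p : List ℤ × List ℤ}

lemma getD_toParts_fst (i : ℕ) :
    (toParts m w).1.getD i 0 = if i < m then (w.getD i (0, 0)).1 else 0 := by
  simp only [toParts, List.getD_eq_getElem?_getD, List.getElem?_take, List.getElem?_map]
  split_ifs <;> cases w[i]? <;> rfl

lemma getD_toParts_snd (i : ℕ) : (toParts m w).2.getD i 0 = (w.getD (i + 1) (0, 0)).2 := by
  simp only [toParts, List.getD_eq_getElem?_getD, List.getElem?_tail, List.getElem?_map]
  cases w[i + 1]? <;> rfl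

lemma length_toParts_fst : (toParts m w).1.length = min m w.length := by
  simp [toParts]

lemma length_toParts_snd : (toParts m w).2.length = w.length - 1 := by
  simp [toParts]

lemma length_ofParts (hp : p.1.length ≤ p.2.length + 1) :
    (ofParts n p).length = p.2.length + 1 := by
  simp [ofParts]
  omega

lemma getD_ofParts (hp : p.1.length ≤ p.2.length + 1) (i : ℕ) :
    (ofParts n p).getD i (0, 0) = (p.1.getD i 0, (n :: p.2).getD i 0) := by
  rw [ofParts, List.getD_zip (by
    simp only [List.length_append, List.length_replicate, List.length_cons]
    omega), List.getD_append_replicate]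

lemma toParts_ofParts (h₁ : p.1.length = m) (h₂ : m ≤ p.2.length + 1) :
    toParts m (ofParts n p) = p := by
  simp only [toParts, ofParts]
  have hlen : (p.1 ++ List.replicate (p.2.length + 1 - p.1.length) 0).length =
      (n :: p.2).length := by
    simp only [List.length_append, List.length_replicate, List.length_cons]
    omega
  rw [List.map_fst_zip hlen.le, List.map_snd_zip hlen.ge, List.take_left' h₁,
    List.tail_cons]

end Parts

section Decomposition
variable {N m e : ℕ} {w : List (ℤ × ℤ)} {p : List ℤ × List ℤ}

lemma toParts_fst_mem (hNme : N + 1 = 2 * m + e) (he : e ≤ 1) (hm : 1 ≤ m) (hw : IsPNF N w)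
    (hs : grid (staircase N m) ⊆ grid w) : (toParts m w).1 ∈ leftParts e m N := by
  obtain ⟨hbd, hstep⟩ := isPNF_iff_getD.1 hw
  obtain ⟨hlen, -, -, hstair⟩ := (subset_grid_staircase_iff (by omega) he hm).1 hs
  refine (mem_leftParts e m N _).2 ⟨by rw [length_toParts_fst]; omega, ?_, fun i hi => ?_⟩
  · rw [List.isChain_iff_getD (d := 0)]
    rintro (_ | i) hi <;> simp only [List.getD_cons_zero, List.getD_cons_succ, getD_toParts_fst,
      List.length_cons, length_toParts_fst] at hi ⊢
    · rw [if_pos (by omega : 0 < m), LeftStep]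
      have := (hstair 0 hm).1
      constructor <;> omega
    · rw [if_pos (by omega), if_pos (by omega)]
      have := hstep i (by omega)
      exact ⟨this.1, this.2.2.1⟩
  · rw [getD_toParts_fst, if_pos hi]
    have := (hstair i hi).1
    exact ⟨(hbd i (by omega)).1, by omega⟩

lemma toParts_snd_mem (hNme : N + 1 = 2 * m + e) (he : e ≤ 1) (hm : 1 ≤ m) (hw : IsPNF N w)
    (h1 : affineLength N w = 1) (hs : grid (staircase N m) ⊆ grid w) :
    (toParts m w).2 ∈ rightParts e m N := by
  obtain ⟨hbd, hstep⟩ := isPNF_iff_getD.1 hw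
  obtain ⟨-, -, hr⟩ := (affineLength_eq_one_iff hw).1 h1
  obtain ⟨hlen, -, -, hstair⟩ := (subset_grid_staircase_iff (by omega) he hm).1 hs
  refine (mem_rightParts e m N _).2 ⟨by rw [length_toParts_snd]; omega, ?_, ?_, fun i hi => ?_⟩
  · rw [List.isChain_iff_getD (d := 0)]
    rintro (_ | i) hi <;> simp only [List.getD_cons_zero, List.getD_cons_succ, getD_toParts_snd,
      List.length_cons, length_toParts_snd] at hi ⊢
    · have := hbd (0 + 1) (by omega)
      have := hr 0 (by omega)
      omega
    · have := hstep (i + 1) (by omega)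
      have := hr i (by omega)
      have := hr (i + 1) (by omega)
      omega
  · rw [List.forall_mem_iff_getD (d := 0), length_toParts_snd]
    intro i hi
    rw [getD_toParts_snd]
    have := hbd (i + 1) (by omega)
    omega
  · rw [getD_toParts_snd]
    have := (hstair i hi).2
    omega

lemma ofParts_toParts (hNme : N + 1 = 2 * m + e) (he : e ≤ 1) (hm : 1 ≤ m) (hw : IsPNF N w)
    (h1 : affineLength N w = 1) (hs : grid (staircase N m) ⊆ grid w) :
    ofParts N (toParts m w) = w := by
  obtain ⟨-, hr0, -⟩ := (affineLength_eq_one_iff hw).1 h1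
  obtain ⟨hlen, hlm, -, -⟩ := (subset_grid_staircase_iff (by omega) he hm).1 hs
  have hp : (toParts m w).1.length ≤ (toParts m w).2.length + 1 := by
    rw [length_toParts_fst, length_toParts_snd]
    omega
  refine List.ext_getD (d := (0, 0)) (by rw [length_ofParts hp, length_toParts_snd]; omega)
    fun i hi => ?_
  rw [length_ofParts hp, length_toParts_snd] at hi
  rw [getD_ofParts hp, getD_toParts_fst]
  refine Prod.ext ?_ ?_
  · split_ifs with him
    · rfl
    · have := hw.getD_fst_le (not_lt.1 him) (by omega)
      have := ((isPNF_iff_getD.1 hw).1 i (by omega)).1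
      omega
  · cases i with
    | zero => exact hr0.symm
    | succ i => exact getD_toParts_snd i

lemma isPNF_ofParts (hNme : N + 1 = 2 * m + e) (hm : 1 ≤ m)
    (hp : p ∈ leftParts e m N ×ˢ rightParts e m N) : IsPNF N (ofParts N p) := by
  obtain ⟨hp1, hp2⟩ := Finset.mem_product.1 hp
  obtain ⟨hlen1, hchain1, hb1⟩ := (mem_leftParts e m N _).1 hp1
  obtain ⟨hlen2, hchain2, hnn2, hb2⟩ := (mem_rightParts e m N _).1 hp2
  have hlt := List.getD_lt_of_isChain_gt hchain2
  have hle : p.1.length ≤ p.2.length + 1 := by omega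
  rw [List.isChain_iff_getD (d := 0)] at hchain1 hchain2
  rw [List.forall_mem_iff_getD (d := 0)] at hnn2
  have hl0 : ∀ i, m ≤ i → p.1.getD i 0 = 0 := fun i hi => List.getD_eq_default _ _ (by omega)
  have hl : ∀ i, 0 ≤ p.1.getD i 0 := fun i =>
    if h : i < m then (hb1 i h).1 else (hl0 i (by omega)).ge
  rw [isPNF_iff_getD, length_ofParts hle]
  simp only [getD_ofParts hle]
  refine ⟨fun i hi => ⟨hl i, ?_⟩, fun i hi => ?_⟩
  · cases i with
    | zero =>
      have := hb1 0 hm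
      simp only [List.getD_cons_zero]
      omega
    | succ j =>
      simp only [List.getD_cons_succ]
      refine ⟨?_, (hlt j (by omega)).le⟩
      rcases lt_or_ge (j + 1) m with hj | hj
      · have := (hb1 _ hj).2
        have := hb2 j (by omega)
        omega
      · rw [hl0 _ hj]
        exact hnn2 j (by omega)
  · have hL : LeftStep (p.1.getD i 0) (p.1.getD (i + 1) 0) := by
      rcases lt_or_ge (i + 1) m with hi' | hi'
      · simpa using hchain1 (i + 1) (by simp only [List.length_cons]; omega)
      · rw [hl0 _ hi']
        exact ⟨hl i, fun h => h.symm⟩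
    have hR : ((N : ℤ) :: p.2).getD (i + 1) 0 < ((N : ℤ) :: p.2).getD i 0 := by
      cases i with
      | zero => simpa using hlt 0 (by omega)
      | succ j => simpa using hchain2 (j + 1) (by simp only [List.length_cons]; omega)
    exact ⟨hL.1, hR.le, hL.2, fun h => absurd h hR.ne⟩

lemma affineLength_ofParts (hNme : N + 1 = 2 * m + e) (hm : 1 ≤ m)
    (hp : p ∈ leftParts e m N ×ˢ rightParts e m N) : affineLength N (ofParts N p) = 1 := by
  obtain ⟨hp1, hp2⟩ := Finset.mem_product.1 hp
  obtain ⟨hlen1, -, -⟩ := (mem_leftParts e m N _).1 hp1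
  obtain ⟨hlen2, hchain2, -, -⟩ := (mem_rightParts e m N _).1 hp2
  have hle : p.1.length ≤ p.2.length + 1 := by omega
  rw [affineLength_eq_one_iff (isPNF_ofParts hNme hm hp), length_ofParts hle]
  simp only [getD_ofParts hle, List.getD_cons_zero, List.getD_cons_succ]
  exact ⟨Nat.succ_pos _, trivial, fun i hi =>
    (List.getD_lt_of_isChain_gt hchain2 i (by omega)).ne⟩

lemma subset_grid_ofParts (hNme : N + 1 = 2 * m + e) (he : e ≤ 1) (hm : 1 ≤ m)
    (hp : p ∈ leftParts e m N ×ˢ rightParts e m N) :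
    grid (staircase N m) ⊆ grid (ofParts N p) := by
  obtain ⟨hp1, hp2⟩ := Finset.mem_product.1 hp
  obtain ⟨hlen1, -, hb1⟩ := (mem_leftParts e m N _).1 hp1
  obtain ⟨hlen2, -, -, hb2⟩ := (mem_rightParts e m N _).1 hp2
  have hle : p.1.length ≤ p.2.length + 1 := by omega
  rw [subset_grid_staircase_iff (by omega) he hm, length_ofParts hle]
  simp only [getD_ofParts hle, List.getD_cons_zero, List.getD_cons_succ]
  refine ⟨by omega, (List.getD_eq_default _ _ hlen1.le).le, le_rfl, fun i hi => ?_⟩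
  have := (hb1 i hi).2
  have := hb2 i hi
  constructor <;> omega

lemma card_pnf_above_staircase (hNme : N + 1 = 2 * m + e) (he : e ≤ 1) (hm : 1 ≤ m) :
    Nat.card {w // IsPNF N w ∧ affineLength N w = 1 ∧ grid (staircase N m) ⊆ grid w} =
      (leftParts e m N).card * (rightParts e m N).card := by
  rw [← Finset.card_product, ← Nat.card_eq_finsetCard]
  exact Nat.card_congr
    { toFun := fun w => ⟨toParts m w.1, Finset.mem_product.2
        ⟨toParts_fst_mem hNme he hm w.2.1 w.2.2.2, toParts_snd_mem hNme he hm w.2.1 w.2.2.1 w.2.2.2⟩⟩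
      invFun := fun p => ⟨ofParts N p.1, isPNF_ofParts hNme hm p.2,
        affineLength_ofParts hNme hm p.2, subset_grid_ofParts hNme he hm p.2⟩
      left_inv := fun w => Subtype.ext (ofParts_toParts hNme he hm w.2.1 w.2.2.1 w.2.2.2)
      right_inv := fun p => by
        obtain ⟨hp1, hp2⟩ := Finset.mem_product.1 p.2
        have h1 := ((mem_leftParts e m N _).1 hp1).1
        have h2 := ((mem_rightParts e m N _).1 hp2).1
        exact Subtype.ext (toParts_ofParts h1 (by omega)) }

end Decomposition

lemma blobbedCAux_add_two_add_one (i j : ℕ) :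
    blobbedCAux (i + 2) (j + 1) = blobbedCAux (i + 1) j + blobbedCAux (i + 1) (j + 2) := rfl

lemma blobbedCAux_add_two_zero (i : ℕ) : blobbedCAux (i + 2) 0 = 0 := rfl

lemma blobbedCAux_add_three_one (i : ℕ) : blobbedCAux (i + 3) 1 = blobbedCAux (i + 2) 2 :=
  (blobbedCAux_add_two_add_one (i + 1) 0).trans (by rw [blobbedCAux_add_two_zero, zero_add])

lemma blobbedCAux_add_one_add_two_mul (i k : ℕ) :
    blobbedCAux (i + 1) (i + 1 + 2 * k) = 2 ^ i := by
  induction i generalizing k with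
  | zero => simp [blobbedCAux, Nat.add_mul_mod_self_left]
  | succ i ih =>
    rw [show i + 1 + 1 + 2 * k = i + 1 + 2 * k + 1 by ring, blobbedCAux_add_two_add_one,
      show i + 1 + 2 * k + 2 = i + 1 + 2 * (k + 1) by ring, ih, ih, pow_succ, mul_two]

lemma sum_range_blobbedCAux_antidiagonal (m t : ℕ) (ht : t ≤ 2 * m + 1) :
    ∑ x ∈ Finset.range (t + 1), blobbedCAux x (2 * m + 2 - x) =
      blobbedCAux (t + 1) (2 * m + 3 - t) := by
  induction t with
  | zero => simp [blobbedCAux, Nat.add_mod]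
  | succ t ih =>
    rw [Finset.sum_range_succ, ih (by omega),
      show 2 * m + 2 - (t + 1) = 2 * m - t + 1 by omega,
      show 2 * m + 3 - (t + 1) = 2 * m - t + 1 + 1 by omega,
      show 2 * m + 3 - t = 2 * m - t + 1 + 2 by omega, blobbedCAux_add_two_add_one, add_comm]

lemma sum_Ico_blobbedCAux_diagonal (a w : ℕ) (ha : 1 ≤ a) (hw : a ≤ w) :
    ∑ x ∈ Finset.Ico a w, blobbedCAux (x + 1) (x + 2 - a) = blobbedCAux (w + 1) (w - a) := by
  induction w, hw using Nat.le_induction with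
  | base =>
    obtain ⟨b, rfl⟩ : ∃ b, a = b + 1 := ⟨a - 1, by omega⟩
    simp [blobbedCAux_add_two_zero]
  | succ w hw ih =>
    rw [Finset.sum_Ico_succ_top hw, ih, show w + 2 - a = w - a + 2 by omega,
      show w + 1 - a = w - a + 1 by omega, blobbedCAux_add_two_add_one w (w - a)]

lemma card_biUnion_image_cons (s : Finset ℕ) (F : ℕ → Finset (List ℤ)) :
    (s.biUnion fun x => (F x).image ((x : ℤ) :: ·)).card = ∑ x ∈ s, (F x).card := by
  rw [Finset.card_biUnion]
  · exact Finset.sum_congr rfl fun x _ => Finset.card_image_of_injective _ List.cons_injective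
  · intro x _ x' _ hne
    simp only [Finset.disjoint_left, Finset.mem_image]
    rintro _ ⟨t, -, rfl⟩ ⟨t', -, h⟩
    exact hne (by exact_mod_cast (List.cons.inj h).1.symm)

lemma card_leftParts_one (m y : ℕ) (hy : y ≤ 2 * m + 1) :
    (leftParts 1 m y).card = blobbedCAux y (2 * m + 2 - y) := by
  induction m generalizing y with
  | zero => interval_cases y <;> rfl
  | succ m ih =>
    set t := min (2 * m + 1) (y - 1)
    rw [leftParts, card_biUnion_image_cons,
      Finset.sum_congr rfl fun x hx => ih x (by have := Finset.mem_range.1 hx; omega),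
      sum_range_blobbedCAux_antidiagonal m t (by omega)]
    rcases Nat.lt_or_ge y (2 * m + 3) with hy' | hy'
    · rcases Nat.eq_zero_or_pos y with rfl | hy0
      · simp [t, blobbedCAux, Nat.add_mod]
      · congr 1 <;> omega
    · obtain rfl : y = 2 * m + 3 := by omega
      rw [show t = 2 * m + 1 by omega, show 2 * m + 3 - (2 * m + 1) = 2 by omega,
        show 2 * (m + 1) + 2 - (2 * m + 3) = 1 by omega, blobbedCAux_add_three_one]

lemma card_leftParts_zero_zero (m : ℕ) : (leftParts 0 m 0).card = 1 := by
  induction m with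
  | zero => rfl
  | succ m ih => simp [leftParts, Finset.card_image_of_injective _ List.cons_injective, ih]

lemma two_mul_card_leftParts_zero (m y : ℕ) (hm : 1 ≤ m) (hy : 1 ≤ y) (hy' : y ≤ 2 * m) :
    2 * (leftParts 0 m y).card = blobbedCAux (y + 1) (2 * m + 1 - y) := by
  induction m generalizing y with
  | zero => omega
  | succ m ih =>
    set t := min (2 * m) (y - 1)
    have hsum : 2 * (leftParts 0 (m + 1) y).card =
        ∑ x ∈ Finset.range (t + 2), blobbedCAux x (2 * m + 2 - x) := by
      rw [leftParts, Nat.add_zero, card_biUnion_image_cons, Finset.mul_sum,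
        Finset.sum_range_succ', card_leftParts_zero_zero, Finset.sum_range_succ' _ (t + 1),
        Finset.sum_range_succ', add_assoc]
      congr 1
      · refine Finset.sum_congr rfl fun x hx => ?_
        have := Finset.mem_range.1 hx
        rw [ih (x + 1) (by omega) (by omega) (by omega)]
        congr 1
        omega
      · simp [blobbedCAux, Nat.add_mod]
    rw [hsum, sum_range_blobbedCAux_antidiagonal m (t + 1) (by omega)]
    rcases Nat.lt_or_ge y (2 * m + 2) with hy'' | hy''
    · congr 1 <;> omega
    · obtain rfl : y = 2 * m + 2 := by omega
      rw [show t = 2 * m by omega, show 2 * m + 3 - (2 * m + 1) = 2 by omega,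
        show 2 * (m + 1) + 1 - (2 * m + 2) = 1 by omega, blobbedCAux_add_three_one]

lemma card_rightParts_one (m y : ℕ) (hy : 2 * m - 1 ≤ y) :
    (rightParts 1 m y).card = blobbedCAux (y + 1) (y + 1 - 2 * m) := by
  induction m generalizing y with
  | zero =>
    simpa [rightParts, card_decreasingLists] using (blobbedCAux_add_one_add_two_mul y 0).symm
  | succ m ih =>
    have hsum : ∀ x ∈ Finset.Ico (2 * m + 1) y,
        (rightParts 1 m x).card = blobbedCAux (x + 1) (x + 2 - (2 * m + 1)) := fun x hx => by
      have := Finset.mem_Ico.1 hx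
      rw [ih x (by omega)]
      congr 1
      omega
    rw [rightParts, card_biUnion_image_cons, Finset.sum_congr rfl hsum,
      sum_Ico_blobbedCAux_diagonal _ _ (by omega) (by omega)]
    congr 1
    omega

lemma two_mul_card_rightParts_zero (m y : ℕ) (hy : 2 * m - 1 ≤ y) :
    2 * (rightParts 0 m y).card = blobbedCAux (y + 2) (y + 2 - 2 * m) := by
  induction m generalizing y with
  | zero =>
    simp only [rightParts, card_decreasingLists, Nat.mul_zero, Nat.sub_zero]
    rw [blobbedCAux_add_one_add_two_mul (y + 1) 0, pow_succ, mul_comm]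
  | succ m ih =>
    have hsum : ∀ x ∈ Finset.Ico (2 * m) y,
        2 * (rightParts 0 m x).card = blobbedCAux (x + 1 + 1) (x + 1 + 2 - (2 * m + 1)) :=
      fun x hx => by
        have := Finset.mem_Ico.1 hx
        rw [ih x (by omega)]
        congr 1
        omega
    rw [rightParts, card_biUnion_image_cons, Finset.mul_sum, Nat.add_zero,
      Finset.sum_congr rfl hsum,
      Finset.sum_Ico_add' (fun u => blobbedCAux (u + 1) (u + 2 - (2 * m + 1))) (2 * m) y 1,
      sum_Ico_blobbedCAux_diagonal _ _ (by omega) (by omega)]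
    congr 1
    omega

lemma numBadPNF_one_eq_card_mul {N m e : ℕ} (hNme : N + 1 = 2 * m + e) (he : e ≤ 1)
    (hm : 1 ≤ m) : numBadPNF N 1 = (leftParts e m N).card * (rightParts e m N).card := by
  rw [← card_pnf_above_staircase hNme he hm, numBadPNF]
  refine Nat.card_congr (Equiv.subtypeEquivRight fun w =>
    and_congr_right fun hw => and_congr_right fun h1 => ?_)
  have hN : (1 : ℤ) ≤ N := by omega
  rw [← containsTranslate_iff_subset hw h1 (one_mem_grid_staircase hN)]
  obtain rfl | rfl : e = 0 ∨ e = 1 := by omega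
  · have hodd : ¬ Even (N : ℤ) := by rintro ⟨k, hk⟩; omega
    obtain ⟨hu₁, hu₂⟩ := top_mem_grid_wI_of_odd hodd
    rw [wJ_eq_staircase (by omega) hm]
    simp [not_containsTranslate_of_mem_grid hw h1 hu₁ hu₂]
  · obtain ⟨hu₁, hu₂⟩ := top_mem_grid_wJ_of_even (n := N) ⟨m, by omega⟩
    rw [wI_eq_staircase (by omega) hm]
    simp [not_containsTranslate_of_mem_grid hw h1 hu₁ hu₂]

lemma blobbedC_natCast_zero (n : ℕ) : blobbedC n 0 = blobbedCAux (n + 1) 1 := by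
  simp [blobbedC]

lemma blobbedC_natCast_one (n : ℕ) : blobbedC n 1 = blobbedCAux (n + 1) 2 := by
  simp [blobbedC]

/-- For `n ≥ 1`: if `n` is even then `d(n,1) = C(n,0)²`, and if `n` is odd then
`4·d(n,1) = C(n,1)²`. -/
theorem numBadPNF_one_blobbedC (n : ℤ) (hn : 1 ≤ n) :
    (Even n → numBadPNF n 1 = blobbedC n 0 ^ 2) ∧
    (Odd n → 4 * numBadPNF n 1 = blobbedC n 1 ^ 2) := by
  lift n to ℕ using (by omega)
  have hC (k : ℕ) : blobbedCAux (2 * k + 3) 1 = blobbedCAux (2 * k + 2) 2 :=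
    blobbedCAux_add_three_one _
  constructor
  · rintro ⟨m, hm⟩
    obtain ⟨k, hk⟩ : ∃ k : ℕ, n = 2 * k + 2 := ⟨m.toNat - 1, by omega⟩
    rw [numBadPNF_one_eq_card_mul (m := k + 1) (e := 1) (by omega) le_rfl (by omega),
      card_leftParts_one _ _ (by omega), card_rightParts_one _ _ (by omega),
      blobbedC_natCast_zero, hk, show 2 * (k + 1) + 2 - (2 * k + 2) = 2 by omega,
      show 2 * k + 2 + 1 - 2 * (k + 1) = 1 by omega, hC, sq]
  · rintro ⟨m, hm⟩
    obtain ⟨k, hk⟩ : ∃ k : ℕ, n = 2 * k + 1 := ⟨m.toNat, by omega⟩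
    rw [numBadPNF_one_eq_card_mul (m := k + 1) (e := 0) (by omega) (Nat.zero_le 1) (by omega),
      show (4 : ℕ) = 2 * 2 from rfl, mul_mul_mul_comm,
      two_mul_card_leftParts_zero _ _ (by omega) (by omega) (by omega),
      two_mul_card_rightParts_zero _ _ (by omega), blobbedC_natCast_one, hk,
      show 2 * (k + 1) + 1 - (2 * k + 1) = 2 by omega,
      show 2 * k + 1 + 2 - 2 * (k + 1) = 1 by omega, hC, sq]
end
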